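/- Let K be a field of prime characteristic p, E = ⟨X,Y⟩ the natural representation of SL_2(K), and l ≥ 0. If there exists a with 0 ≤ a ≤ l such that C(l,a) ≡ 0 mod p, then the SL_2(K)-representations Sym^l E and Sym_l E are not isomorphic, provided |K| > 1 + 2l. -/

import Mathlib

open scoped TensorProduct

noncomputable section

variable (K : Type*) [Field K]

/-- The subspace of `E^{⊗l}` spanned by the elements `w·σ - w` (place
permutation action of `S_l`). -/
def symRel (V : Type*) [AddCommGroup V] [Module K V] (l : ℕ) :
    Submodule K (⨂[K]^l V) :=
  Submodule.span K
    {x | ∃ (w : ⨂[K]^l V) (σ : Equiv.Perm (Fin l)),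
      x = PiTensorProduct.reindex K (fun _ => V) σ w - w}

/-- The quotient symmetric power `Sym^l V`. -/
def SymQ (V : Type*) [AddCommGroup V] [Module K V] (l : ℕ) : Type _ :=
  (⨂[K]^l V) ⧸ symRel K V l

instance (V : Type*) [AddCommGroup V] [Module K V] (l : ℕ) :
    AddCommGroup (SymQ K V l) :=
  inferInstanceAs (AddCommGroup ((⨂[K]^l V) ⧸ symRel K V l))

instance (V : Type*) [AddCommGroup V] [Module K V] (l : ℕ) :
    Module K (SymQ K V l) :=
  inferInstanceAs (Module K ((⨂[K]^l V) ⧸ symRel K V l))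

/-- The invariant symmetric power `Sym_l V ⊆ V^{⊗l}`. -/
def SymInv (V : Type*) [AddCommGroup V] [Module K V] (l : ℕ) :
    Submodule K (⨂[K]^l V) :=
  ⨅ σ : Equiv.Perm (Fin l),
    LinearMap.eqLocus (PiTensorProduct.reindex K (fun _ => V) σ).toLinearMap LinearMap.id

/-- The diagonal action of `g ∈ SL_2(K)` on `E^{⊗l}`, where `E = K²` is the
natural module. -/
def Tmap (l : ℕ) (g : Matrix.SpecialLinearGroup (Fin 2) K) :
    (⨂[K]^l (Fin 2 → K)) →ₗ[K] ⨂[K]^l (Fin 2 → K) :=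
  PiTensorProduct.map
    (fun _ : Fin l => Matrix.mulVecLin (↑g : Matrix (Fin 2) (Fin 2) K))

/-!
An equivariant isomorphism `Sym^l E ≃ Sym_l E` yields an `SL₂(K)`-equivariant endomorphism `A`
of `E^{⊗l}` that kills exactly `symRel` and takes values in the symmetric tensors. Index the
standard basis of `E^{⊗l}` by `f : Fin l → Fin 2`, the weight of `f` being its number of
`Y`-factors. Since `|K| > 1 + 2l`, there is `t` with `t^k ≠ 1` for `0 < k ≤ 2l`, and
`diag(t, t⁻¹)` then separates the weights `0, …, l`, so `A` preserves weight spaces. In particular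
the `X^{⊗l}`-coordinate of `A` is `c` times the `X^{⊗l}`-coordinate, where `c` is the
`X^{⊗l}`-coordinate of `A X^{⊗l}`. The `X^{⊗l}`-coordinate composed with the unipotent
`[[1, 1], [0, 1]]` is the sum of all coordinates, which is `1` on every basis tensor and
`C(l, a) · const = 0` on a symmetric tensor of weight `a`. Feeding in a basis tensor of weight `a`
gives `c = 0`, hence `A X^{⊗l} = 0`, i.e. `X^{⊗l} ∈ symRel`; but the sum of all coordinates
vanishes on `symRel`.
-/

open Finset Module PiTensorProduct
open scoped MatrixGroups

section Weight

variable {l : ℕ}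

def weight (f : Fin l → Fin 2) : ℕ := #{i | f i = 1}

lemma weight_le (f : Fin l → Fin 2) : weight f ≤ l := by
  simpa [weight] using card_filter_le (univ : Finset (Fin l)) fun i => f i = 1

lemma weight_eq_zero_iff {f : Fin l → Fin 2} : weight f = 0 ↔ f = 0 := by
  simp only [weight, card_eq_zero, filter_eq_empty_iff, mem_univ, true_implies, funext_iff,
    Pi.zero_apply]
  exact forall_congr' fun i => by omega

@[simp]
lemma weight_zero : weight (0 : Fin l → Fin 2) = 0 := weight_eq_zero_iff.mpr rfl

lemma exists_weight_eq {a : ℕ} (ha : a ≤ l) : ∃ f : Fin l → Fin 2, weight f = a :=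
  ⟨fun i => if (i : ℕ) < a then 1 else 0, by simp [weight, Fin.card_filter_val_lt, ha]⟩

lemma exists_perm_of_weight_eq {f g : Fin l → Fin 2} (h : weight f = weight g) :
    ∃ σ : Equiv.Perm (Fin l), f = g ∘ σ := by
  obtain ⟨e⟩ : Nonempty ({i // f i = 1} ≃ {i // g i = 1}) :=
    Fintype.card_eq.mp (by simpa [Fintype.card_subtype, weight] using h)
  refine ⟨e.extendSubtype, funext fun i => ?_⟩
  by_cases hi : f i = 1
  · simp [hi, e.extendSubtype_mem i hi]
  · have := e.extendSubtype_not_mem i hi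
    simp only [Function.comp_apply]
    omega

lemma card_weight_eq (a : ℕ) : #{f : Fin l → Fin 2 | weight f = a} = l.choose a := by
  have h := card_powersetCard a (univ : Finset (Fin l))
  rw [card_univ, Fintype.card_fin] at h
  rw [← h]
  refine card_nbij' (fun f => ({i | f i = 1} : Finset (Fin l)))
    (fun S i => if i ∈ S then 1 else 0) ?_ ?_ ?_ ?_
  · intro f hf
    rw [mem_coe, mem_filter] at hf
    simpa [weight] using hf.2
  · intro S hS
    rw [mem_coe, mem_powersetCard] at hS
    rw [mem_coe, mem_filter]
    simpa [weight] using hS.2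
  · intro f _
    funext i
    simp only [mem_filter, mem_univ, true_and]
    split_ifs <;> omega
  · intro S _
    ext i
    simp

lemma prod_comp_eq_pow_mul_pow {M : Type*} [CommMonoid M] (d : Fin 2 → M) (f : Fin l → Fin 2) :
    ∏ i, d (f i) = d 0 ^ (l - weight f) * d 1 ^ weight f := by
  have hcard := card_filter_add_card_filter_not (s := univ) fun i => f i = 1
  rw [card_univ, Fintype.card_fin] at hcard
  calc ∏ i, d (f i) = ∏ i, if f i = 1 then d 1 else d 0 :=
        prod_congr rfl fun i _ => by split_ifs with h <;> [rw [h]; rw [show f i = 0 by omega]]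
    _ = d 0 ^ (l - weight f) * d 1 ^ weight f := by
        rw [prod_ite, prod_const, prod_const, mul_comm, weight]
        congr 2
        omega

end Weight

section PowNeOne

variable {K}

lemma exists_pow_ne_one_of_lt_card {n : ℕ} (h : ((1 + n : ℕ) : Cardinal) < Cardinal.mk K) :
    ∃ t : K, t ≠ 0 ∧ ∀ k, 0 < k → k ≤ n → t ^ k ≠ 1 := by
  cases finite_or_infinite K with
  | inl _ =>
    have := Fintype.ofFinite K
    have hn : 1 + n < Fintype.card K := by
      rw [Cardinal.mk_fintype] at h
      exact_mod_cast h
    obtain ⟨g, hg⟩ := IsCyclic.exists_generator (α := Kˣ)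
    have hord : orderOf g = Fintype.card K - 1 := by
      rw [orderOf_eq_card_of_forall_mem_zpowers hg, Nat.card_units, Nat.card_eq_fintype_card]
    refine ⟨g, g.ne_zero, fun k hk hkn hgk => ?_⟩
    have := Nat.le_of_dvd hk (orderOf_dvd_of_pow_eq_one (Units.ext (by simpa using hgk)))
    omega
  | inr _ =>
    classical
    obtain ⟨t, ht⟩ := Infinite.exists_notMem_finset
      (insert 0 ((Icc 1 n).biUnion fun k => Polynomial.nthRootsFinset k (1 : K)))
    simp only [mem_insert, mem_biUnion, mem_Icc, not_or, not_exists, not_and] at ht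
    refine ⟨t, ht.1, fun k hk hkn htk => ht.2 k ⟨hk, hkn⟩ ?_⟩
    rwa [Polynomial.mem_nthRootsFinset hk]

lemma pow_injOn_Iic_of_pow_ne_one {G₀ : Type*} [GroupWithZero G₀] {t : G₀} (ht : t ≠ 0)
    {n : ℕ} (hord : ∀ k, 0 < k → k ≤ n → t ^ k ≠ 1) : Set.InjOn (t ^ ·) (Set.Iic n) := by
  intro m hm m' hm' h
  wlog hlt : m < m' generalizing m m'
  · rcases (not_lt.mp hlt).eq_or_lt with heq | hgt
    · exact heq.symm
    · exact (this hm' hm h.symm hgt).symm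
  refine absurd ?_ (hord (m' - m) (by omega) ((Nat.sub_le _ _).trans hm'))
  apply mul_left_cancel₀ (pow_ne_zero m ht)
  dsimp only at h
  rw [← pow_add, Nat.add_sub_cancel' hlt.le, mul_one, h]

/-- `t ^ (l - d) * t⁻¹ ^ d` is the eigenvalue of `diag(t, t⁻¹)` on tensors of weight `d`. -/
lemma eq_of_pow_sub_mul_inv_pow_eq {t : K} (ht : t ≠ 0) {l : ℕ}
    (hord : ∀ k, 0 < k → k ≤ 2 * l → t ^ k ≠ 1) {d d' : ℕ} (hd : d ≤ l) (hd' : d' ≤ l)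
    (h : t ^ (l - d) * t⁻¹ ^ d = t ^ (l - d') * t⁻¹ ^ d') : d = d' := by
  have key : ∀ e ≤ l, t ^ (l - e) * t⁻¹ ^ e * t ^ (2 * e) = t ^ l := fun e he => by
    obtain ⟨m, rfl⟩ := Nat.exists_eq_add_of_le he
    rw [Nat.add_sub_cancel_left, inv_pow]
    field_simp
    ring
  have hsq : t ^ (2 * d) = t ^ (2 * d') := by
    refine mul_left_cancel₀ (by simp [ht] : t ^ (l - d) * t⁻¹ ^ d ≠ 0) ?_
    rw [key d hd, h, key d' hd']
  have := pow_injOn_Iic_of_pow_ne_one ht hord (by simpa using hd) (by simpa using hd') hsq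
  omega

end PowNeOne

section TensorBasis

variable {K} {l : ℕ}

variable (K l) in
def tensorBasis : Basis (Fin l → Fin 2) K (⨂[K]^l (Fin 2 → K)) :=
  Basis.piTensorProduct fun _ => Pi.basisFun K (Fin 2)

variable (K l) in
def coordSum : (⨂[K]^l (Fin 2 → K)) →ₗ[K] K :=
  ∑ f, (tensorBasis K l).coord f

lemma tensorBasis_apply (f : Fin l → Fin 2) :
    tensorBasis K l f = ⨂ₜ[K] i, Pi.single (f i) 1 := by
  simp [tensorBasis]

lemma tensorBasis_repr_tprod (v : Fin l → Fin 2 → K) (f : Fin l → Fin 2) :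
    (tensorBasis K l).repr (⨂ₜ[K] i, v i) f = ∏ i, v i (f i) := by
  simp [tensorBasis]

lemma reindex_tensorBasis (σ : Equiv.Perm (Fin l)) (f : Fin l → Fin 2) :
    reindex K (fun _ => Fin 2 → K) σ (tensorBasis K l f) = tensorBasis K l (f ∘ σ.symm) := by
  simp [tensorBasis_apply, Function.comp_def]

lemma coord_comp_reindex (σ : Equiv.Perm (Fin l)) (f : Fin l → Fin 2) :
    (tensorBasis K l).coord f ∘ₗ (reindex K (fun _ => Fin 2 → K) σ).toLinearMap
      = (tensorBasis K l).coord (f ∘ σ) := by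
  refine (tensorBasis K l).ext fun g => ?_
  simp only [LinearMap.comp_apply, LinearEquiv.coe_coe, reindex_tensorBasis, Basis.coord_apply,
    Basis.repr_self, Finsupp.single_apply, Equiv.comp_symm_eq]

lemma coord_comp_perm_of_mem_symInv {x : ⨂[K]^l (Fin 2 → K)} (hx : x ∈ SymInv K (Fin 2 → K) l)
    (σ : Equiv.Perm (Fin l)) (f : Fin l → Fin 2) :
    (tensorBasis K l).coord (f ∘ σ) x = (tensorBasis K l).coord f x := by
  have hσ : reindex K (fun _ => Fin 2 → K) σ x = x := by
    simpa [SymInv] using Submodule.mem_iInf _ |>.mp hx σ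
  rw [← coord_comp_reindex, LinearMap.comp_apply, LinearEquiv.coe_coe, hσ]

lemma coordSum_tprod (v : Fin l → Fin 2 → K) :
    coordSum K l (⨂ₜ[K] i, v i) = ∏ i, ∑ j, v i j := by
  simp only [coordSum, LinearMap.sum_apply, Basis.coord_apply, tensorBasis_repr_tprod]
  exact (Fintype.prod_sum fun i j => v i j).symm

lemma coordSum_tensorBasis (f : Fin l → Fin 2) : coordSum K l (tensorBasis K l f) = 1 := by
  simp [tensorBasis_apply, coordSum_tprod]

lemma symRel_le_ker_coordSum : symRel K (Fin 2 → K) l ≤ LinearMap.ker (coordSum K l) := by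
  rw [symRel, Submodule.span_le]
  rintro _ ⟨w, σ, rfl⟩
  suffices coordSum K l ∘ₗ (reindex K (fun _ => Fin 2 → K) σ).toLinearMap = coordSum K l by
    simpa [sub_eq_zero] using LinearMap.congr_fun this w
  refine PiTensorProduct.ext <| MultilinearMap.ext fun v => ?_
  simp only [LinearMap.compMultilinearMap_apply, LinearMap.comp_apply, LinearEquiv.coe_coe,
    reindex_tprod, coordSum_tprod]
  exact Equiv.prod_comp σ.symm fun i => ∑ j, v i j

lemma tensorBasis_notMem_symRel (f : Fin l → Fin 2) :
    tensorBasis K l f ∉ symRel K (Fin 2 → K) l := fun h => by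
  simpa [coordSum_tensorBasis] using symRel_le_ker_coordSum h

lemma coordSum_eq_zero_of_mem_symInv {x : ⨂[K]^l (Fin 2 → K)}
    (hx : x ∈ SymInv K (Fin 2 → K) l) {a : ℕ}
    (hxa : ∀ f, weight f ≠ a → (tensorBasis K l).coord f x = 0) (hchoose : (l.choose a : K) = 0) :
    coordSum K l x = 0 := by
  rw [coordSum, LinearMap.sum_apply,
    ← sum_filter_of_ne fun f _ h => not_not.mp (mt (hxa f) h)]
  rcases eq_empty_or_nonempty {f : Fin l → Fin 2 | weight f = a} with hempty | ⟨f₀, hf₀⟩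
  · rw [hempty, sum_empty]
  rw [sum_eq_card_nsmul (b := (tensorBasis K l).coord f₀ x), card_weight_eq, nsmul_eq_mul,
    hchoose, zero_mul]
  intro f hf
  obtain ⟨σ, rfl⟩ :=
    exists_perm_of_weight_eq ((mem_filter.mp hf).2.trans (mem_filter.mp hf₀).2.symm)
  exact coord_comp_perm_of_mem_symInv hx σ f₀

end TensorBasis

section Action

variable {K} {l : ℕ}

def torus (t : K) (ht : t ≠ 0) : SL(2, K) :=
  ⟨Matrix.diagonal ![t, t⁻¹], by simp [ht]⟩

variable (K) in
def unipotent : SL(2, K) :=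
  ⟨!![1, 1; 0, 1], by simp⟩

lemma Tmap_torus_tensorBasis {t : K} (ht : t ≠ 0) (f : Fin l → Fin 2) :
    Tmap K l (torus t ht) (tensorBasis K l f)
      = (t ^ (l - weight f) * t⁻¹ ^ weight f) • tensorBasis K l f := by
  simp only [Tmap, tensorBasis_apply, map_tprod, Matrix.mulVecLin_apply, torus,
    Matrix.diagonal_mulVec_single, mul_one]
  rw [show t ^ (l - weight f) * t⁻¹ ^ weight f = ∏ i, ![t, t⁻¹] (f i) from
    (prod_comp_eq_pow_mul_pow ![t, t⁻¹] f).symm, ← MultilinearMap.map_smul_univ]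
  congr 1
  funext i
  rw [← Pi.single_smul, smul_eq_mul, mul_one]

lemma coord_comp_Tmap_torus {t : K} (ht : t ≠ 0) (g : Fin l → Fin 2) :
    (tensorBasis K l).coord g ∘ₗ Tmap K l (torus t ht)
      = (t ^ (l - weight g) * t⁻¹ ^ weight g) • (tensorBasis K l).coord g := by
  refine (tensorBasis K l).ext fun f => ?_
  by_cases hfg : f = g
  · subst hfg
    simp [Tmap_torus_tensorBasis]
  · simp [Tmap_torus_tensorBasis, hfg]

lemma coord_zero_comp_Tmap_unipotent :
    (tensorBasis K l).coord 0 ∘ₗ Tmap K l (unipotent K) = coordSum K l := by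
  refine PiTensorProduct.ext <| MultilinearMap.ext fun v => ?_
  simp [Tmap, coordSum_tprod, tensorBasis_repr_tprod, unipotent, dotProduct, Fin.sum_univ_two]

end Action

section Equivariant

variable {K} {l : ℕ} {t : K} (ht : t ≠ 0) (hord : ∀ k, 0 < k → k ≤ 2 * l → t ^ k ≠ 1)
  {A : Module.End K (⨂[K]^l (Fin 2 → K))}
include ht hord

lemma coord_apply_tensorBasis_eq_zero_of_weight_ne (hA : Commute A (Tmap K l (torus t ht)))
    {f g : Fin l → Fin 2} (hfg : weight f ≠ weight g) :
    (tensorBasis K l).coord g (A (tensorBasis K l f)) = 0 := by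
  set c := (tensorBasis K l).coord g (A (tensorBasis K l f))
  have h : (t ^ (l - weight f) * t⁻¹ ^ weight f) * c = (t ^ (l - weight g) * t⁻¹ ^ weight g) * c :=
    calc _ = (tensorBasis K l).coord g (A (Tmap K l (torus t ht) (tensorBasis K l f))) := by
          rw [Tmap_torus_tensorBasis, map_smul, map_smul, smul_eq_mul]
      _ = ((tensorBasis K l).coord g ∘ₗ Tmap K l (torus t ht)) (A (tensorBasis K l f)) := by
          rw [← Module.End.mul_apply, hA.eq, Module.End.mul_apply, LinearMap.comp_apply]
      _ = _ := by rw [coord_comp_Tmap_torus, LinearMap.smul_apply, smul_eq_mul]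
  by_contra hc
  exact hfg (eq_of_pow_sub_mul_inv_pow_eq ht hord (weight_le f) (weight_le g)
    (mul_right_cancel₀ hc h))

lemma coord_zero_comp_eq_smul (hA : Commute A (Tmap K l (torus t ht))) :
    (tensorBasis K l).coord 0 ∘ₗ A
      = (tensorBasis K l).coord 0 (A (tensorBasis K l 0)) • (tensorBasis K l).coord 0 := by
  refine (tensorBasis K l).ext fun f => ?_
  by_cases hf : f = 0
  · subst hf
    simp
  · have hwf : weight f ≠ weight (0 : Fin l → Fin 2) := by simpa [weight_eq_zero_iff] using hf
    simp [coord_apply_tensorBasis_eq_zero_of_weight_ne ht hord hA hwf, Ne.symm hf]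

lemma apply_tensorBasis_zero_eq_zero (hA : ∀ g, Commute A (Tmap K l g))
    (hAsym : ∀ x, A x ∈ SymInv K (Fin 2 → K) l) {a : ℕ} (ha : a ≤ l)
    (hchoose : (l.choose a : K) = 0) : A (tensorBasis K l 0) = 0 := by
  have hsep : ∀ f g : Fin l → Fin 2, weight f ≠ weight g →
      (tensorBasis K l).coord g (A (tensorBasis K l f)) = 0 :=
    fun _ _ => coord_apply_tensorBasis_eq_zero_of_weight_ne ht hord (hA _)
  obtain ⟨f, rfl⟩ := exists_weight_eq ha
  set c := (tensorBasis K l).coord 0 (A (tensorBasis K l 0))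
  have hc : c = 0 := calc
    c = c * coordSum K l (tensorBasis K l f) := by rw [coordSum_tensorBasis, mul_one]
    _ = ((tensorBasis K l).coord 0 ∘ₗ A) (Tmap K l (unipotent K) (tensorBasis K l f)) := by
      rw [coord_zero_comp_eq_smul ht hord (hA _), ← coord_zero_comp_Tmap_unipotent]
      rfl
    _ = coordSum K l (A (tensorBasis K l f)) := by
      rw [LinearMap.comp_apply, ← Module.End.mul_apply, (hA _).eq, Module.End.mul_apply,
        ← coord_zero_comp_Tmap_unipotent, LinearMap.comp_apply]
    _ = 0 := coordSum_eq_zero_of_mem_symInv (hAsym _) (fun g hg => hsep _ g (Ne.symm hg)) hchoose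
  refine (tensorBasis K l).ext_elem fun g => ?_
  by_cases hg : g = 0
  · subst hg
    simp only [map_zero, Finsupp.coe_zero, Pi.zero_apply]
    exact hc
  · simpa using hsep 0 g (by simpa [weight_eq_zero_iff, eq_comm] using hg)

end Equivariant

theorem stmt11 (p : ℕ) [CharP K p] (l : ℕ)
    (ha : ∃ a ≤ l, Nat.choose l a % p = 0)
    (hcard : ((1 + 2 * l : ℕ) : Cardinal) < Cardinal.mk K) :
    ¬ ∃ f : SymQ K (Fin 2 → K) l ≃ₗ[K] SymInv K (Fin 2 → K) l,
        ∀ (g : Matrix.SpecialLinearGroup (Fin 2) K) (x : ⨂[K]^l (Fin 2 → K)),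
          (↑(f (Submodule.Quotient.mk (Tmap K l g x))) : ⨂[K]^l (Fin 2 → K))
            = Tmap K l g ↑(f (Submodule.Quotient.mk x)) := by
  obtain ⟨a, hal, hpa⟩ := ha
  obtain ⟨t, ht, hord⟩ := exists_pow_ne_one_of_lt_card hcard
  rintro ⟨F, hF⟩
  have hchoose : (l.choose a : K) = 0 :=
    (CharP.cast_eq_zero_iff K p _).mpr (Nat.dvd_of_mod_eq_zero hpa)
  let A : Module.End K (⨂[K]^l (Fin 2 → K)) :=
    (SymInv K (Fin 2 → K) l).subtype ∘ₗ F.toLinearMap ∘ₗ (symRel K (Fin 2 → K) l).mkQ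
  have hA : A (tensorBasis K l 0) = 0 :=
    apply_tensorBasis_zero_eq_zero ht hord (fun g => LinearMap.ext (hF g)) (fun x => (F _).2)
      hal hchoose
  exact tensorBasis_notMem_symRel (K := K) 0
    ((Submodule.Quotient.mk_eq_zero _).mp (F.map_eq_zero_iff.mp (Subtype.ext hA)))
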